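/- Let p be an odd prime, Fp = ZMod p, let n ≥ 2, let k be odd with 1 ≤ k ≤ n−1, and take s = 1. Then the number of distinct sets of the form { Q_P·M·Q_P⁻¹ : M ∈ T(n,k,1) }, as P ranges over GL_n(Fp) and Q_P = [[P,0],[0,1]] ∈ GL_{n+1}(Fp), equals |GL_n(Fp)| divided by ((p−1)/2) · |{ U a k×k matrix over Fp : Uᵀ·U = I }| · |GL_{n−1−k}(Fp)| · p^{k(n−1−k) + (n−1)}. -/

import Mathlib

open Matrix

/-- `d_i` (0-indexed): `d i = 1` for `i + 1 < k`, `d i = s` for `i + 1 = k`,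
and `d i = 0` otherwise. -/
def dvec (p k : ℕ) (s : ZMod p) (i : ℕ) : ZMod p :=
  if i + 1 < k then 1 else if i + 1 = k then s else 0

/-- The `(n+1)×(n+1)` matrix `τ(r)`: it agrees with the identity except that its
`(i, n+1)` entry is `r_i` for `1 ≤ i ≤ n` and its `(n, j)` entry is `d_j·r_j`
for `1 ≤ j ≤ n-1` (stated here with 0-indexed rows and columns). -/
def tauM (p n k : ℕ) (s : ZMod p) (r : Fin n → ZMod p) :
    Matrix (Fin (n + 1)) (Fin (n + 1)) (ZMod p) :=
  Matrix.of fun i j =>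
    if i.val = j.val then 1
    else if j.val = n then (if h : i.val < n then r ⟨i.val, h⟩ else 0)
    else if i.val = n - 1 then
      dvec p k s j.val * (if h : j.val < n then r ⟨j.val, h⟩ else 0)
    else 0

/-- `T(n,k,s) = { τ(r) : r ∈ Fp^n }`. -/
def Tset (p n k : ℕ) (s : ZMod p) :
    Set (Matrix (Fin (n + 1)) (Fin (n + 1)) (ZMod p)) :=
  { M | ∃ r : Fin n → ZMod p, M = tauM p n k s r }

/-- The block matrix `Q = [[P, 0], [0, 1]]` in `M_{n+1}(Fp)`. -/
def QofP (p n : ℕ) (P : Matrix (Fin n) (Fin n) (ZMod p)) :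
    Matrix (Fin (n + 1)) (Fin (n + 1)) (ZMod p) :=
  Matrix.reindex finSumFinEquiv finSumFinEquiv
    (Matrix.fromBlocks P 0 0 (1 : Matrix (Fin 1) (Fin 1) (ZMod p)))

/-!
Conjugation by `Q_P` sends `τ(r)` to the matrix with last column `P r` and rank-one part
`(P u) (D r)ᵀ P⁻¹`, where `u` is the `n`-th basis vector and `D = diag(d)`. Comparing rank-one
tensors, `T(n,k,s)` is normalised by `Q_P` exactly when `P u = l u` and `Pᵀ D P = l D` for a single
scalar `l`, so by orbit–stabilizer the number of conjugates is `|GL_n|` divided by the number of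
such `P`. For `s = 1`, in the block decomposition `k + (n-1-k) + 1` these `P` are the block lower
triangular matrices with diagonal blocks `A` (`Aᵀ A = l`), `E ∈ GL_{n-1-k}` and `l`, and
`k(n-1-k) + (n-1)` free entries below the diagonal. Since `k` is odd, `(det A)² = l^k` makes `l` a
square, so `(μ, U) ↦ (μ², μ U)` maps `𝔽_p^× × O_k` two-to-one onto the pairs `(l, A)`.
-/

theorem vecMulVec_vecMul_eq_iff {K m n o : Type*} [Field K] [Fintype n] [DecidableEq n]
    {c c' : o → K} {B B' : Matrix n m K} (hc' : c' ≠ 0) (hB' : B' ≠ 0) :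
    (∀ r, vecMulVec c (r ᵥ* B) = vecMulVec c' (r ᵥ* B')) ↔ ∃ l : K, c = l • c' ∧ l • B = B' := by
  constructor
  · intro h
    have hentry : ∀ a i j, c a * B i j = c' a * B' i j := fun a i j => by
      simpa [vecMulVec_apply, single_vecMul] using congrFun (congrFun (h (Pi.single i 1)) a) j
    obtain ⟨a, ha⟩ : ∃ a, c' a ≠ 0 := Function.ne_iff.mp hc'
    obtain ⟨i, j, hij⟩ : ∃ i j, B' i j ≠ 0 := by
      by_contra! h0
      exact hB' (Matrix.ext h0)
    have hB : (c a / c' a) • B = B' := by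
      ext i j
      rw [Matrix.smul_apply, smul_eq_mul, div_mul_eq_mul_div, hentry, mul_div_cancel_left₀ _ ha]
    have hBij : B i j ≠ 0 := fun h0 => hij (by rw [← hB, Matrix.smul_apply, h0, smul_zero])
    refine ⟨c a / c' a, funext fun b => mul_right_cancel₀ hBij ?_, hB⟩
    rw [hentry, ← hB, Pi.smul_apply, Matrix.smul_apply, smul_eq_mul, smul_eq_mul]
    ring
  · rintro ⟨l, rfl, rfl⟩ r
    rw [smul_vecMulVec, vecMul_smul, vecMulVec_smul]

open Pointwise in
theorem card_range_image_smul {G X : Type*} [Group G] [Finite G] [MulAction G X] (S : Set X) :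
    Nat.card (Set.range fun g : G => (g • ·) '' S) =
      Nat.card G / Nat.card {g : G // (g • ·) '' S = S} := by
  have horbit : Set.range (fun g : G => (g • ·) '' S) = MulAction.orbit G S := by
    simp only [Set.image_smul]
    rfl
  have hstab : Nat.card {g : G // (g • ·) '' S = S} = Nat.card (MulAction.stabilizer G S) :=
    Nat.card_congr <| Equiv.subtypeEquivRight fun g => by
      rw [Set.image_smul, MulAction.mem_stabilizer_iff]
  rw [horbit, hstab, Nat.card_coe_set_eq, ← MulAction.index_stabilizer,
    ← (MulAction.stabilizer G S).card_mul_index, Nat.mul_div_cancel_left _ Nat.card_pos]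

theorem card_eq_mul_of_card_fiber_eq {α β : Type*} [Finite α] [Finite β] (f : α → β) {n : ℕ}
    (h : ∀ b, Nat.card {a // f a = b} = n) : Nat.card α = n * Nat.card β := by
  have := Fintype.ofFinite β
  rw [← Nat.card_congr (Equiv.sigmaFiberEquiv f), Nat.card_sigma,
    Finset.sum_congr rfl fun b _ => h b, Finset.sum_const, Finset.card_univ, smul_eq_mul,
    Nat.card_eq_fintype_card, mul_comm]

theorem card_units_sq_eq {K : Type*} [Field K] (hK : ringChar K ≠ 2) (μ₀ : Kˣ) :
    Nat.card {μ : Kˣ // μ ^ 2 = μ₀ ^ 2} = 2 := by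
  refine Nat.card_eq_two_iff.mpr ⟨⟨μ₀, rfl⟩, ⟨-μ₀, neg_sq μ₀⟩, fun h => ?_, ?_⟩
  · have h' : -(μ₀ : K) = μ₀ := by simpa [Units.ext_iff] using congrArg Subtype.val h.symm
    exact μ₀.ne_zero ((Ring.eq_self_iff_eq_zero_of_char_ne_two hK).mp h')
  · refine Set.eq_univ_of_forall fun ⟨μ, hμ⟩ => ?_
    have hμ' : (μ : K) ^ 2 = (μ₀ : K) ^ 2 := by simpa [Units.ext_iff] using hμ
    rcases sq_eq_sq_iff_eq_or_eq_neg.mp hμ' with h | h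
    · exact Or.inl (Subtype.ext (Units.ext h))
    · exact Or.inr (Subtype.ext (Units.ext (by simpa using h)))

section Similitude

variable {R : Type*} [CommRing R] {m : Type*} [Fintype m] [DecidableEq m]

def IsSimilitude (D : Matrix m m R) (u : m → R) (P : Matrix m m R) : Prop :=
  ∃ l : R, Pᵀ * D * P = l • D ∧ P *ᵥ u = l • u

/-- `τ(r)` written in blocks `m ⊕ Fin 1`, with the rank-one part `u (D r)ᵀ`; for the paper's
`T(n,k,s)`, `u` is the last basis vector and `D = diag(d)`. -/
def blockTau (D : Matrix m m R) (u r : m → R) : Matrix (m ⊕ Fin 1) (m ⊕ Fin 1) R :=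
  fromBlocks (1 + vecMulVec u (r ᵥ* D)) (replicateCol (Fin 1) r) 0 1

theorem inv_fromBlocks_one (P : GL m R) :
    (fromBlocks (P : Matrix m m R) 0 0 (1 : Matrix (Fin 1) (Fin 1) R))⁻¹ =
      fromBlocks ((P⁻¹ : GL m R) : Matrix m m R) 0 0 1 :=
  inv_eq_left_inv <| by simp [fromBlocks_multiply]

theorem conj_blockTau (D : Matrix m m R) (u r : m → R) (P : GL m R) :
    fromBlocks (P : Matrix m m R) 0 0 1 * blockTau D u r *
        fromBlocks ((P⁻¹ : GL m R) : Matrix m m R) 0 0 1 =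
      fromBlocks (1 + vecMulVec (P *ᵥ u) (r ᵥ* (D * ((P⁻¹ : GL m R) : Matrix m m R))))
        (replicateCol (Fin 1) (P *ᵥ r)) 0 1 := by
  simp [blockTau, fromBlocks_multiply, mul_add, add_mul, mul_vecMulVec, vecMulVec_mul,
    vecMul_vecMul, replicateCol_mulVec]

theorem isSimilitude_reindex_iff {m' : Type*} [Fintype m'] [DecidableEq m'] (e : m ≃ m')
    (D P : Matrix m m R) (u : m → R) :
    IsSimilitude (reindex e e D) (u ∘ e.symm) (reindex e e P) ↔ IsSimilitude D u P := by
  refine exists_congr fun l => and_congr ?_ ?_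
  · have h : ∀ M : Matrix m m R, reindex e e M = reindexAlgEquiv R R e M := fun _ => rfl
    rw [transpose_reindex, h, h, h, ← map_mul, ← map_mul, ← map_smul,
      (reindexAlgEquiv R R e).injective.eq_iff]
  · rw [reindex_apply, submatrix_mulVec_equiv]
    simp [funext_iff, e.symm.surjective.forall, Function.comp_assoc]

theorem card_isSimilitude_reindex {m' : Type*} [Fintype m'] [DecidableEq m'] (e : m ≃ m')
    (D : Matrix m m R) (u : m → R) :
    Nat.card {P : GL m' R // IsSimilitude (reindex e e D) (u ∘ e.symm) (P : Matrix m' m' R)} =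
      Nat.card {P : GL m R // IsSimilitude D u (P : Matrix m m R)} :=
  Nat.card_congr ((Units.mapEquiv (reindexAlgEquiv R R e).toMulEquiv).subtypeEquiv
    fun P => (isSimilitude_reindex_iff e D P u).symm).symm

end Similitude

theorem conj_image_range_blockTau_eq_iff {K m : Type*} [Field K] [Fintype m] [DecidableEq m]
    {D : Matrix m m K} {u : m → K} (hD : D ≠ 0) (hu : u ≠ 0) (P : GL m K) :
    (fun M => fromBlocks (P : Matrix m m K) 0 0 1 * M *
        fromBlocks ((P⁻¹ : GL m K) : Matrix m m K) 0 0 1) '' Set.range (blockTau D u) =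
      Set.range (blockTau D u) ↔ IsSimilitude D u (P : Matrix m m K) := by
  set conj := fun M : Matrix (m ⊕ Fin 1) (m ⊕ Fin 1) K => fromBlocks (P : Matrix m m K) 0 0 1 *
    M * fromBlocks ((P⁻¹ : GL m K) : Matrix m m K) 0 0 1
  have hc : ∀ r, conj (blockTau D u r) =
      fromBlocks (1 + vecMulVec (P *ᵥ u) (r ᵥ* (D * ((P⁻¹ : GL m K) : Matrix m m K))))
        (replicateCol (Fin 1) (P *ᵥ r)) 0 1 := (conj_blockTau D u · P)
  have hsurj : Function.Surjective ((P : Matrix m m K) *ᵥ ·) := fun s =>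
    ⟨((P⁻¹ : GL m K) : Matrix m m K) *ᵥ s, by simp [mulVec_mulVec]⟩
  have hrange : conj '' Set.range (blockTau D u) = Set.range (blockTau D u) ↔
      ∀ r, conj (blockTau D u r) = blockTau D u (P *ᵥ r) := by
    rw [← Set.range_comp]
    refine ⟨fun h r => ?_, fun h => ?_⟩
    · obtain ⟨s, hs⟩ : conj (blockTau D u r) ∈ Set.range (blockTau D u) :=
        h ▸ Set.mem_range_self r
      have hsr : s = P *ᵥ r := by
        rw [hc, blockTau, fromBlocks_inj, replicateCol_inj] at hs
        exact hs.2.1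
      rw [← hs, hsr]
    · rw [← hsurj.range_comp (blockTau D u)]
      exact congrArg Set.range (funext h)
  have hconj : ∀ r, conj (blockTau D u r) = blockTau D u (P *ᵥ r) ↔
      vecMulVec (P *ᵥ u) (r ᵥ* (D * ((P⁻¹ : GL m K) : Matrix m m K))) =
        vecMulVec u (r ᵥ* ((P : Matrix m m K)ᵀ * D)) := fun r => by
    rw [hc, blockTau, ← vecMul_vecMul r _ D, vecMul_transpose]
    simp only [fromBlocks_inj, add_right_inj, and_true]
  have hPD : (P : Matrix m m K)ᵀ * D ≠ 0 := fun h0 => hD <|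
    calc D = ((P : Matrix m m K) * ((P⁻¹ : GL m K) : Matrix m m K))ᵀ * D := by simp
      _ = 0 := by rw [transpose_mul, Matrix.mul_assoc, h0, Matrix.mul_zero]
  rw [hrange, forall_congr' hconj, vecMulVec_vecMul_eq_iff hu hPD]
  refine exists_congr fun l => ?_
  rw [and_comm, ← smul_mul_assoc, Units.mul_inv_eq_iff_eq_mul, eq_comm]

def orthoSimilitudes (κ K : Type*) [Fintype κ] [DecidableEq κ] [Field K] :
    Set (Kˣ × Matrix κ κ K) :=
  {x | x.2ᵀ * x.2 = (x.1 : K) • 1}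

section OrthoSimilitudes

variable {K : Type*} [Field K] {κ : Type*} [Fintype κ] [DecidableEq κ]

theorem det_ne_zero_of_transpose_mul_self_eq_smul {A : Matrix κ κ K} {l : K} (hl : l ≠ 0)
    (h : Aᵀ * A = l • 1) : A.det ≠ 0 := fun h0 => by
  have hdet := congrArg det h
  rw [det_mul, det_transpose, h0, mul_zero, det_smul, det_one, mul_one] at hdet
  exact pow_ne_zero _ hl hdet.symm

theorem exists_sq_eq_of_mem_orthoSimilitudes (hκ : Odd (Fintype.card κ))
    {x : Kˣ × Matrix κ κ K} (hx : x ∈ orthoSimilitudes κ K) : ∃ μ : Kˣ, μ ^ 2 = x.1 := by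
  obtain ⟨j, hj⟩ := hκ
  have hdet := det_ne_zero_of_transpose_mul_self_eq_smul x.1.ne_zero hx
  have hsq : Units.mk0 _ hdet ^ 2 = x.1 ^ Fintype.card κ := Units.ext <| by
    simpa [sq, det_smul] using congrArg det hx
  exact ⟨Units.mk0 _ hdet * x.1⁻¹ ^ j, by rw [mul_pow, hsq, hj]; group⟩

def scaleOrthogonal (y : Kˣ × {U : Matrix κ κ K // Uᵀ * U = 1}) : orthoSimilitudes κ K :=
  ⟨(y.1 ^ 2, (y.1 : K) • y.2.1), by simp [orthoSimilitudes, y.2.2, smul_smul, sq]⟩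

theorem card_fiber_scaleOrthogonal (hK : ringChar K ≠ 2) (hκ : Odd (Fintype.card κ))
    (x : orthoSimilitudes κ K) : Nat.card {y // scaleOrthogonal y = x} = 2 := by
  obtain ⟨⟨l, A⟩, hA⟩ := x
  obtain ⟨μ₀, hμ₀ : μ₀ ^ 2 = l⟩ := exists_sq_eq_of_mem_orthoSimilitudes hκ hA
  have hA' : Aᵀ * A = (l : K) • 1 := hA
  rw [← card_units_sq_eq hK μ₀, hμ₀]
  refine Nat.card_congr
    { toFun := fun y => ⟨y.1.1, congrArg (fun z => z.1.1) y.2⟩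
      invFun := fun μ => ⟨(μ.1, ⟨((μ.1⁻¹ : Kˣ) : K) • A, by
          simp [hA', smul_smul, ← μ.2, sq]⟩), Subtype.ext <|
        Prod.ext μ.2 (by simp [scaleOrthogonal, smul_smul])⟩
      left_inv := fun ⟨⟨ν, V, hV⟩, hy⟩ => by
        have hνV : (ν : K) • V = A := congrArg (fun z => z.1.2) hy
        simp [← hνV, smul_smul]
      right_inv := fun μ => rfl }

theorem two_mul_card_orthoSimilitudes [Finite K] (hK : ringChar K ≠ 2)
    (hκ : Odd (Fintype.card κ)) :
    2 * Nat.card (orthoSimilitudes κ K) =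
      Nat.card Kˣ * Nat.card {U : Matrix κ κ K // Uᵀ * U = 1} := by
  rw [← Nat.card_prod]
  exact (card_eq_mul_of_card_fiber_eq scaleOrthogonal (card_fiber_scaleOrthogonal hK hκ)).symm

end OrthoSimilitudes

section BlockCount

variable {K : Type*} [Field K] {κ τ : Type*} [Fintype κ] [DecidableEq κ] [Fintype τ]
  [DecidableEq τ]

theorem isSimilitude_fromBlocks_iff (A : Matrix κ κ K) (B : Matrix κ τ K) (C : Matrix τ κ K)
    (E : Matrix τ τ K) (b : Matrix (κ ⊕ τ) (Fin 1) K) (c : Matrix (Fin 1) (κ ⊕ τ) K)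
    (a : Matrix (Fin 1) (Fin 1) K) :
    IsSimilitude (fromBlocks (fromBlocks 1 0 0 0) 0 0 0) (Pi.single (Sum.inr 0) 1)
        (fromBlocks (fromBlocks A B C E) b c a) ↔
      b = 0 ∧ ∃ l : K, a = l • 1 ∧ Aᵀ * A = l • 1 ∧ Aᵀ * B = 0 ∧ Bᵀ * B = 0 := by
  have hcol : ∀ l : K, fromBlocks (fromBlocks A B C E) b c a *ᵥ Pi.single (Sum.inr 0) 1 =
      l • Pi.single (Sum.inr 0) 1 ↔ b = 0 ∧ a = l • 1 := fun l => by
    rw [mulVec_single_one, funext_iff, ← Matrix.ext_iff, ← Matrix.ext_iff]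
    simp [Sum.forall, Pi.single_apply, Fin.forall_fin_one]
  constructor
  · rintro ⟨l, hD, hu⟩
    obtain ⟨rfl, rfl⟩ := (hcol l).mp hu
    simp only [fromBlocks_transpose, transpose_zero, transpose_smul, transpose_one,
      fromBlocks_multiply, mul_one, Matrix.mul_zero, add_zero, Matrix.mul_one, mul_zero,
      Matrix.zero_mul, zero_mul, Matrix.mul_smul, smul_zero, Algebra.mul_smul_comm, fromBlocks_smul,
      fromBlocks_inj, and_self, and_true] at hD
    exact ⟨rfl, l, rfl, hD.1, hD.2.1, hD.2.2.2⟩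
  · rintro ⟨rfl, l, rfl, hA, hB, hBB⟩
    have hBA : Bᵀ * A = 0 := by
      rw [← transpose_transpose (Bᵀ * A), transpose_mul, transpose_transpose, hB, transpose_zero]
    refine ⟨l, ?_, (hcol l).mpr ⟨rfl, rfl⟩⟩
    simp [fromBlocks_transpose, fromBlocks_multiply, fromBlocks_smul, hA, hB, hBA, hBB]

/-- Parameters `((l, A), C, E, c)` of the block lower triangular matrix
`[[A, 0, 0], [C, E, 0], [c, l]]` with blocks `κ, τ, 1`. -/
abbrev BlockData (κ τ K : Type*) [Fintype κ] [DecidableEq κ] [Fintype τ] [DecidableEq τ]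
    [Field K] :=
  orthoSimilitudes κ K × Matrix τ κ K × GL τ K × Matrix (Fin 1) (κ ⊕ τ) K

def BlockData.toMatrix (x : BlockData κ τ K) : Matrix ((κ ⊕ τ) ⊕ Fin 1) ((κ ⊕ τ) ⊕ Fin 1) K :=
  fromBlocks (fromBlocks x.1.1.2 0 x.2.1 x.2.2.1) 0 x.2.2.2 ((x.1.1.1 : K) • 1)

theorem BlockData.det_toMatrix_ne_zero (x : BlockData κ τ K) : x.toMatrix.det ≠ 0 := by
  rw [toMatrix, det_fromBlocks_zero₁₂, det_fromBlocks_zero₁₂]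
  simp [det_ne_zero_of_transpose_mul_self_eq_smul x.1.1.1.ne_zero x.1.2, x.2.2.1.det_ne_zero]

theorem BlockData.isSimilitude_toMatrix (x : BlockData κ τ K) :
    IsSimilitude (fromBlocks (fromBlocks 1 0 0 0) 0 0 0) (Pi.single (Sum.inr 0) 1) x.toMatrix :=
  (isSimilitude_fromBlocks_iff ..).mpr ⟨rfl, x.1.1.1, rfl, x.1.2, by simp, by simp⟩

theorem BlockData.toMatrix_injective :
    Function.Injective (BlockData.toMatrix : BlockData κ τ K → _) := by
  rintro ⟨⟨⟨l, A⟩, hA⟩, C, E, c⟩ ⟨⟨⟨l', A'⟩, hA'⟩, C', E', c'⟩ h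
  simp only [toMatrix, fromBlocks_inj] at h
  obtain ⟨⟨rfl, -, rfl, hE⟩, -, rfl, hl⟩ := h
  obtain rfl : l = l' := Units.ext <| by simpa using congrFun (congrFun hl 0) 0
  rw [Units.ext hE]

theorem BlockData.exists_toMatrix_eq (P : GL ((κ ⊕ τ) ⊕ Fin 1) K)
    (hP : IsSimilitude (fromBlocks (fromBlocks 1 0 0 0) 0 0 0) (Pi.single (Sum.inr 0) 1)
      (P : Matrix ((κ ⊕ τ) ⊕ Fin 1) ((κ ⊕ τ) ⊕ Fin 1) K)) :
    ∃ x : BlockData κ τ K, x.toMatrix = P := by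
  set M : Matrix ((κ ⊕ τ) ⊕ Fin 1) ((κ ⊕ τ) ⊕ Fin 1) K := ↑P
  have hM : fromBlocks (fromBlocks M.toBlocks₁₁.toBlocks₁₁ M.toBlocks₁₁.toBlocks₁₂
      M.toBlocks₁₁.toBlocks₂₁ M.toBlocks₁₁.toBlocks₂₂) M.toBlocks₁₂ M.toBlocks₂₁ M.toBlocks₂₂ =
        M := by
    simp only [fromBlocks_toBlocks]
  rw [← hM, isSimilitude_fromBlocks_iff] at hP
  obtain ⟨hb, l, ha, hA, hB, -⟩ := hP
  have hdet : M.det ≠ 0 := P.det_ne_zero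
  rw [← hM, hb, ha, det_fromBlocks_zero₁₂] at hdet
  have hl : l ≠ 0 := by rintro rfl; simp at hdet
  have hAdet := det_ne_zero_of_transpose_mul_self_eq_smul hl hA
  have hB0 : M.toBlocks₁₁.toBlocks₁₂ = 0 := by
    have hAt : IsUnit (M.toBlocks₁₁.toBlocks₁₁)ᵀ.det := by simpa using hAdet
    simpa [← Matrix.mul_assoc, nonsing_inv_mul _ hAt] using
      congrArg ((M.toBlocks₁₁.toBlocks₁₁)ᵀ⁻¹ * ·) hB
  rw [hB0, det_fromBlocks_zero₁₂] at hdet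
  refine ⟨(⟨(Units.mk0 l hl, _), hA⟩, M.toBlocks₁₁.toBlocks₂₁,
    GeneralLinearGroup.mkOfDetNeZero _ (right_ne_zero_of_mul (left_ne_zero_of_mul hdet)),
    M.toBlocks₂₁), ?_⟩
  conv_rhs => rw [← hM, hB0, hb, ha]
  rfl

theorem card_isSimilitude_fromBlocks :
    Nat.card {P : GL ((κ ⊕ τ) ⊕ Fin 1) K // IsSimilitude (fromBlocks (fromBlocks 1 0 0 0) 0 0 0)
        (Pi.single (Sum.inr 0) 1) (P : Matrix ((κ ⊕ τ) ⊕ Fin 1) ((κ ⊕ τ) ⊕ Fin 1) K)} =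
      Nat.card (orthoSimilitudes κ K) * Nat.card (Matrix τ κ K) * Nat.card (GL τ K) *
        Nat.card (Matrix (Fin 1) (κ ⊕ τ) K) := by
  let Φ (x : BlockData κ τ K) : {P : GL ((κ ⊕ τ) ⊕ Fin 1) K //
      IsSimilitude (fromBlocks (fromBlocks 1 0 0 0) 0 0 0) (Pi.single (Sum.inr 0) 1)
        (P : Matrix ((κ ⊕ τ) ⊕ Fin 1) ((κ ⊕ τ) ⊕ Fin 1) K)} :=
    ⟨.mkOfDetNeZero x.toMatrix x.det_toMatrix_ne_zero, x.isSimilitude_toMatrix⟩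
  have hΦ : Function.Bijective Φ := by
    refine ⟨fun x y h => BlockData.toMatrix_injective congr(($h).1.1), fun ⟨P, hP⟩ => ?_⟩
    obtain ⟨x, hx⟩ := BlockData.exists_toMatrix_eq P hP
    exact ⟨x, Subtype.ext (Units.ext hx)⟩
  rw [← Nat.card_congr (Equiv.ofBijective Φ hΦ)]
  simp only [Nat.card_prod, mul_assoc]

end BlockCount

section Model

variable {p : ℕ}

theorem dvec_eq_zero {k i : ℕ} {s : ZMod p} (h : k ≤ i) : dvec p k s i = 0 := by
  rw [dvec, if_neg (by omega), if_neg (by omega)]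

theorem dvec_eq_one {k i : ℕ} (h : i < k) : dvec p k 1 i = 1 := by
  unfold dvec
  split_ifs <;> first | rfl | omega

theorem tauM_eq_reindex_blockTau {m k : ℕ} {s : ZMod p} (hk : k ≤ m) (r : Fin (m + 1) → ZMod p) :
    tauM p (m + 1) k s r = reindex finSumFinEquiv finSumFinEquiv
      (blockTau (diagonal fun j : Fin (m + 1) => dvec p k s j) (Pi.single (Fin.last m) 1) r) := by
  have hlt : ∀ x : Fin (m + 1), m + 1 = x ↔ False := fun x => iff_false_intro x.isLt.ne'
  ext i j
  obtain ⟨i, rfl⟩ := finSumFinEquiv.surjective i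
  obtain ⟨j, rfl⟩ := finSumFinEquiv.surjective j
  rcases i with i | i <;> rcases j with j | j <;>
    simp [tauM, blockTau, vecMulVec_apply, vecMul_diagonal, one_apply, Pi.single_apply,
      Fin.ext_iff, Fin.is_le, hlt, eq_comm (b := m + 1)]
  split_ifs <;> simp_all [dvec_eq_zero, mul_comm]

theorem inv_QofP {n : ℕ} (P : GL (Fin n) (ZMod p)) :
    (QofP p n P)⁻¹ = reindex finSumFinEquiv finSumFinEquiv
      (fromBlocks ((P⁻¹ : GL (Fin n) (ZMod p)) : Matrix (Fin n) (Fin n) (ZMod p)) 0 0 1) := by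
  rw [QofP, inv_reindex, inv_fromBlocks_one]

def QofPHom {n : ℕ} : GL (Fin n) (ZMod p) →* GL (Fin (n + 1)) (ZMod p) :=
  Units.map
    { toFun := QofP p n
      map_one' := by simp [QofP]
      map_mul' := fun P R => by
        simp [QofP, reindex_apply, submatrix_mul_equiv, fromBlocks_multiply] }

theorem card_range_conj_QofP [NeZero p] {n : ℕ}
    (S : Set (Matrix (Fin (n + 1)) (Fin (n + 1)) (ZMod p))) :
    Nat.card (Set.range fun P : GL (Fin n) (ZMod p) =>
        (fun M => QofP p n P * M * (QofP p n P)⁻¹) '' S) =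
      Nat.card (GL (Fin n) (ZMod p)) /
        Nat.card {P : GL (Fin n) (ZMod p) //
          (fun M => QofP p n P * M * (QofP p n P)⁻¹) '' S = S} := by
  let _ : MulAction (GL (Fin n) (ZMod p)) (Matrix (Fin (n + 1)) (Fin (n + 1)) (ZMod p)) :=
    MulAction.compHom _ (ConjAct.toConjAct.toMonoidHom.comp QofPHom)
  have hsmul : ∀ (P : GL (Fin n) (ZMod p)) M, P • M = QofP p n P * M * (QofP p n P)⁻¹ :=
    fun P M => by
      rw [MulAction.compHom_smul_def, ConjAct.units_smul_def, coe_units_inv]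
      rfl
  simpa only [hsmul] using card_range_image_smul (G := GL (Fin n) (ZMod p)) S

def finBlockEquiv (k t : ℕ) : (Fin k ⊕ Fin t) ⊕ Fin 1 ≃ Fin (k + t + 1) :=
  (finSumFinEquiv.sumCongr (Equiv.refl _)).trans finSumFinEquiv

theorem reindex_finBlockEquiv_fromBlocks {k t : ℕ} :
    reindex (finBlockEquiv k t) (finBlockEquiv k t)
        (fromBlocks (fromBlocks 1 0 0 0) 0 0 0 : Matrix _ _ (ZMod p)) =
      diagonal fun j : Fin (k + t + 1) => dvec p k 1 j := by
  ext i j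
  obtain ⟨i, rfl⟩ := (finBlockEquiv k t).surjective i
  obtain ⟨j, rfl⟩ := (finBlockEquiv k t).surjective j
  rcases i with (i | i) | i <;> rcases j with (j | j) | j <;>
    simp [finBlockEquiv, diagonal_apply, one_apply, Fin.ext_iff, dvec_eq_one, dvec_eq_zero] <;>
    omega

theorem single_comp_finBlockEquiv_symm {k t : ℕ} :
    (Pi.single (Sum.inr 0) 1 : (Fin k ⊕ Fin t) ⊕ Fin 1 → ZMod p) ∘ (finBlockEquiv k t).symm =
      Pi.single (Fin.last (k + t)) 1 := by
  ext j
  obtain ⟨j, rfl⟩ := (finBlockEquiv k t).surjective j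
  rcases j with (j | j) | j <;> simp [finBlockEquiv, Pi.single_apply, Fin.ext_iff] <;> omega

variable [Fact p.Prime]

theorem conj_image_Tset_eq_iff {m k : ℕ} {s : ZMod p} (hk1 : 1 ≤ k) (hk : k ≤ m) (hs : s ≠ 0)
    (P : GL (Fin (m + 1)) (ZMod p)) :
    (fun M => QofP p (m + 1) P * M * (QofP p (m + 1) P)⁻¹) '' Tset p (m + 1) k s =
        Tset p (m + 1) k s ↔
      IsSimilitude (diagonal fun j : Fin (m + 1) => dvec p k s j) (Pi.single (Fin.last m) 1)
        (P : Matrix (Fin (m + 1)) (Fin (m + 1)) (ZMod p)) := by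
  set D := diagonal fun j : Fin (m + 1) => dvec p k s j
  set R := reindex (α := ZMod p) (finSumFinEquiv (m := m + 1) (n := 1)) finSumFinEquiv
  have hT : Tset p (m + 1) k s = R '' Set.range (blockTau D (Pi.single (Fin.last m) 1)) := by
    rw [← Set.range_comp]
    ext M
    exact exists_congr fun r => by rw [tauM_eq_reindex_blockTau hk, eq_comm]; rfl
  have hconj : (fun M => QofP p (m + 1) P * M * (QofP p (m + 1) P)⁻¹) ∘ R =
      R ∘ fun M => fromBlocks (P : Matrix (Fin (m + 1)) (Fin (m + 1)) (ZMod p)) 0 0 1 * M *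
        fromBlocks ((P⁻¹ : GL (Fin (m + 1)) (ZMod p)) : Matrix _ _ (ZMod p)) 0 0 1 := by
    funext M
    rw [Function.comp_apply, inv_QofP]
    simp only [Function.comp_apply, QofP, R, reindex_apply, submatrix_mul_equiv]
  have hd0 : dvec p k s 0 ≠ 0 := by
    unfold dvec
    split_ifs <;> first | exact one_ne_zero | exact hs | omega
  have hD : D ≠ 0 := fun h => hd0 <| by simpa [D] using congrFun (congrFun h 0) 0
  rw [hT, ← Set.image_comp, hconj, Set.image_comp,
    R.injective.image_injective.eq_iff, conj_image_range_blockTau_eq_iff hD (by simp)]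

theorem card_isSimilitude_dvec {k t : ℕ} :
    Nat.card {P : GL (Fin (k + t + 1)) (ZMod p) //
        IsSimilitude (diagonal fun j : Fin (k + t + 1) => dvec p k 1 j)
          (Pi.single (Fin.last (k + t)) 1)
          (P : Matrix (Fin (k + t + 1)) (Fin (k + t + 1)) (ZMod p))} =
      Nat.card (orthoSimilitudes (Fin k) (ZMod p)) * Nat.card (GL (Fin t) (ZMod p)) *
        p ^ (k * t + (k + t)) := by
  rw [← reindex_finBlockEquiv_fromBlocks, ← single_comp_finBlockEquiv_symm,
    card_isSimilitude_reindex, card_isSimilitude_fromBlocks]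
  simp only [Nat.card_eq_fintype_card, Matrix, Fintype.card_fun, Fintype.card_sum,
    Fintype.card_fin, ZMod.card, ← pow_mul, pow_add]
  ring

end Model

theorem stmt_8_general (p : ℕ) (hp : p.Prime) (hodd : Odd p) (n k : ℕ)
    (hk2 : k ≤ n - 1) (hkodd : Odd k) :
    Nat.card (Set.range fun P : GL (Fin n) (ZMod p) =>
        (fun M => QofP p n (P : Matrix (Fin n) (Fin n) (ZMod p)) * M *
            (QofP p n (P : Matrix (Fin n) (Fin n) (ZMod p)))⁻¹) ''
          Tset p n k 1) =
      Nat.card (GL (Fin n) (ZMod p)) /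
        (((p - 1) / 2) *
          Nat.card {U : Matrix (Fin k) (Fin k) (ZMod p) // Uᵀ * U = 1} *
          Nat.card (GL (Fin (n - 1 - k)) (ZMod p)) *
          p ^ (k * (n - 1 - k) + (n - 1))) := by
  have := Fact.mk hp
  obtain ⟨t, rfl⟩ : ∃ t, n = k + t + 1 := ⟨n - 1 - k, by have := hkodd.pos; omega⟩
  have hstab := fun P : GL (Fin (k + t + 1)) (ZMod p) =>
    conj_image_Tset_eq_iff hkodd.pos (Nat.le_add_right k t) (one_ne_zero (α := ZMod p)) P
  have hchar : ringChar (ZMod p) ≠ 2 := by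
    rw [ZMod.ringChar_zmod_n]
    rintro rfl
    exact absurd hodd (by decide)
  have hGO := two_mul_card_orthoSimilitudes (κ := Fin k) hchar (by simpa using hkodd)
  rw [Nat.card_eq_fintype_card (α := (ZMod p)ˣ), ZMod.card_units,
    ← Nat.two_mul_div_two_of_even (n := p - 1) (Nat.Odd.sub_odd hodd odd_one), mul_assoc] at hGO
  rw [card_range_conj_QofP, Nat.card_congr (Equiv.subtypeEquivRight hstab), card_isSimilitude_dvec,
    Nat.eq_of_mul_eq_mul_left two_pos hGO, show k + t + 1 - 1 - k = t by omega, Nat.add_sub_cancel]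

/-- For `k` odd, the number of distinct conjugates of `T(n,k,1)`
under `Q_P` for `P ∈ GL_n(Fp)` equals `|GL_n|` divided by
`((p-1)/2)·|O_k|·|GL_{n-1-k}|·p^{k(n-1-k)+(n-1)}`. -/
theorem stmt_8 (p : ℕ) (hp : p.Prime) (hodd : Odd p) (n k : ℕ)
    (hn : 2 ≤ n) (hk1 : 1 ≤ k) (hk2 : k ≤ n - 1) (hkodd : Odd k) :
    Nat.card (Set.range fun P : GL (Fin n) (ZMod p) =>
        (fun M => QofP p n (P : Matrix (Fin n) (Fin n) (ZMod p)) * M *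
            (QofP p n (P : Matrix (Fin n) (Fin n) (ZMod p)))⁻¹) ''
          Tset p n k 1) =
      Nat.card (GL (Fin n) (ZMod p)) /
        (((p - 1) / 2) *
          Nat.card {U : Matrix (Fin k) (Fin k) (ZMod p) // Uᵀ * U = 1} *
          Nat.card (GL (Fin (n - 1 - k)) (ZMod p)) *
          p ^ (k * (n - 1 - k) + (n - 1))) :=
  stmt_8_general p hp hodd n k hk2 hkodd
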